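/- arXiv:2603.01595 — 2 statements merged into one kernel-verified Lean document; each statement's English description precedes it below -/
import Mathlib

section
/- In a disjointive distributive residuated lattice, let x, y, z, u, w be prime filters with xy ⊆ u and uz ⊆ w; then the filter ⟨yz⟩ generated by the product set yz is proper, i.e., there are no b₁,…,bₙ ∈ y and c₁,…,cₙ ∈ z with ⋀ᵢ(bᵢ·cᵢ) = ⊥. -/
/-- A disjointive distributive residuated lattice. -/
class DDRL (A : Type*) extends DistribLattice A, BoundedOrder A where
  mul : A → A → A
  neg : A → A
  ldiv : A → A → A
  rdiv : A → A → A
  mul_assoc : ∀ x y z : A, mul (mul x y) z = mul x (mul y z)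
  res_left : ∀ x y z : A, mul x y ≤ z ↔ y ≤ ldiv x z
  res_right : ∀ x y z : A, mul x y ≤ z ↔ x ≤ rdiv z y
  disjointive : ∀ x : A, x ⊓ neg x = ⊥

/-- A (lattice) filter: nonempty, upward closed, and closed under meets. -/
def IsFilter {A : Type*} [Lattice A] (F : Set A) : Prop :=
  F.Nonempty ∧ (∀ a b : A, a ∈ F → a ≤ b → b ∈ F) ∧ (∀ a b : A, a ∈ F → b ∈ F → a ⊓ b ∈ F)

/-- A prime filter: a proper filter (⊥ ∉ F) such that a ⊔ b ∈ F implies a ∈ F or b ∈ F. -/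
def IsPrimeFilter {A : Type*} [Lattice A] [OrderBot A] (F : Set A) : Prop :=
  IsFilter F ∧ (⊥ : A) ∉ F ∧ ∀ a b : A, a ⊔ b ∈ F → a ∈ F ∨ b ∈ F

/-- Pointwise multiplication of subsets: {a·b | a ∈ X, b ∈ Y}. -/
def mulSet {A : Type*} [DDRL A] (X Y : Set A) : Set A :=
  {c | ∃ a ∈ X, ∃ b ∈ Y, c = DDRL.mul a b}

lemma DDRL.mul_le_mul {A : Type*} [DDRL A] {a a' b b' : A} (ha : a ≤ a') (hb : b ≤ b') :
    DDRL.mul a b ≤ DDRL.mul a' b' := by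
  have h1 : DDRL.mul a' b ≤ DDRL.mul a' b' := by
    rw [DDRL.res_left]
    exact le_trans hb ((DDRL.res_left a' b' (DDRL.mul a' b')).mp le_rfl)
  have h2 : DDRL.mul a b ≤ DDRL.mul a' b := by
    rw [DDRL.res_right]
    exact le_trans ha ((DDRL.res_right a' b (DDRL.mul a' b)).mp le_rfl)
  exact le_trans h2 h1

lemma DDRL.mul_bot {A : Type*} [DDRL A] (a : A) : DDRL.mul a ⊥ = ⊥ :=
  le_antisymm ((DDRL.res_left a ⊥ ⊥).mpr bot_le) bot_le

lemma filter_finset_inf_mem {A : Type*} [DistribLattice A] [BoundedOrder A] {F : Set A}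
    (hF : IsFilter F) {ι : Type*} {s : Finset ι} (hs : s.Nonempty) {f : ι → A}
    (hf : ∀ i ∈ s, f i ∈ F) : s.inf f ∈ F := by
  induction hs using Finset.Nonempty.cons_induction with
  | singleton a => simpa using hf a (by simp)
  | cons a s ha hs ih =>
    rw [Finset.inf_cons]
    exact hF.2.2 _ _ (hf a (Finset.mem_cons_self a s))
      (ih (fun i hi => hf i (Finset.mem_cons_of_mem hi)))

/-- The filter generated by yz is proper: no finite meet of products bᵢ·cᵢ with
bᵢ ∈ y, cᵢ ∈ z can equal ⊥ (otherwise ⊥ ∈ w, contradicting properness of w). -/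
theorem generated_filter_proper {A : Type*} [DDRL A]
    (x y z u w : Set A)
    (hx : IsPrimeFilter x) (hy : IsPrimeFilter y) (hz : IsPrimeFilter z)
    (hu : IsPrimeFilter u) (hw : IsPrimeFilter w)
    (hxyu : mulSet x y ⊆ u) (huzw : mulSet u z ⊆ w)
    (n : ℕ) (b c : Fin (n + 1) → A)
    (hb : ∀ i, b i ∈ y) (hc : ∀ i, c i ∈ z) :
    Finset.univ.inf (fun i => DDRL.mul (b i) (c i)) ≠ ⊥ := by
  intro hbot
  obtain ⟨a, hax⟩ := hx.1.1
  set B := Finset.univ.inf b with hB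
  set C := Finset.univ.inf c with hC
  have hBy : B ∈ y := filter_finset_inf_mem hy.1 Finset.univ_nonempty (fun i _ => hb i)
  have hCz : C ∈ z := filter_finset_inf_mem hz.1 Finset.univ_nonempty (fun i _ => hc i)
  have haBu : DDRL.mul a B ∈ u := hxyu ⟨a, hax, B, hBy, rfl⟩
  have hmem : DDRL.mul (DDRL.mul a B) C ∈ w := huzw ⟨_, haBu, C, hCz, rfl⟩
  have hle : DDRL.mul B C ≤ Finset.univ.inf (fun i => DDRL.mul (b i) (c i)) :=
    Finset.le_inf fun i _ =>
      DDRL.mul_le_mul (Finset.inf_le (Finset.mem_univ i)) (Finset.inf_le (Finset.mem_univ i))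
  have hle2 : DDRL.mul (DDRL.mul a B) C ≤ ⊥ := by
    rw [DDRL.mul_assoc]
    calc DDRL.mul a (DDRL.mul B C) ≤ DDRL.mul a ⊥ :=
          DDRL.mul_le_mul le_rfl (hbot ▸ hle)
      _ = ⊥ := DDRL.mul_bot a
  exact hw.2.1 (hw.1.2.1 _ _ hmem (le_antisymm hle2 bot_le ▸ le_rfl))
end

section
/- The prime filter frame of a disjointive distributive residuated lattice is a disjointive associative frame: on the set of prime filters with x∘y := {z | ∀a∈x, ∀b∈y, a·b ∈ z} and N defined on definable sets by N({x | a∈x}) := {x | ¬a∈x}, we have (x∘y)∘z = x∘(y∘z) and X ∩ N(X) = ∅. -/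
open Classical

/-- The set of prime filters of A. -/
def PF (A : Type*) [DDRL A] := {F : Set A // IsPrimeFilter F}

/-- The ternary-relation composition on prime filters:
x ∘ y = {z | ∀ a ∈ x, ∀ b ∈ y, a·b ∈ z}. -/
def pfCirc {A : Type*} [DDRL A] (x y : PF A) : Set (PF A) :=
  {z | ∀ a ∈ x.1, ∀ b ∈ y.1, DDRL.mul a b ∈ z.1}

/-- Lifting of `pfCirc` to sets. -/
def pfScirc {A : Type*} [DDRL A] (X Y : Set (PF A)) : Set (PF A) :=
  ⋃ x ∈ X, ⋃ y ∈ Y, pfCirc x y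

/-- The negation operation on sets of prime filters: on definable sets
{x | a ∈ x} it returns {x | ¬a ∈ x}, and ∅ otherwise. -/
noncomputable def pfN {A : Type*} [DDRL A] (Y : Set (PF A)) : Set (PF A) :=
  if h : ∃ a : A, Y = {x : PF A | a ∈ x.1} then
    {x : PF A | DDRL.neg h.choose ∈ x.1}
  else ∅

section AuxMul

variable {A : Type*} [DDRL A]

lemma ddrl_mul_le_mul {a b c d : A} (h1 : a ≤ c) (h2 : b ≤ d) :
    DDRL.mul a b ≤ DDRL.mul c d := by
  have h3 : DDRL.mul c b ≤ DDRL.mul c d :=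
    (DDRL.res_left c b (DDRL.mul c d)).mpr
      (le_trans h2 ((DDRL.res_left c d (DDRL.mul c d)).mp le_rfl))
  have h4 : DDRL.mul a b ≤ DDRL.mul c b :=
    (DDRL.res_right a b (DDRL.mul c b)).mpr
      (le_trans h1 ((DDRL.res_right c b (DDRL.mul c b)).mp le_rfl))
  exact le_trans h4 h3

lemma ddrl_mul_bot (a : A) : DDRL.mul a ⊥ = ⊥ :=
  le_antisymm ((DDRL.res_left a ⊥ ⊥).mpr bot_le) bot_le

lemma ddrl_bot_mul (a : A) : DDRL.mul ⊥ a = ⊥ :=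
  le_antisymm ((DDRL.res_right ⊥ a ⊥).mpr bot_le) bot_le

lemma ddrl_mul_sup (a b c : A) :
    DDRL.mul a (b ⊔ c) = DDRL.mul a b ⊔ DDRL.mul a c :=
  le_antisymm
    ((DDRL.res_left _ _ _).mpr (sup_le ((DDRL.res_left _ _ _).mp le_sup_left)
      ((DDRL.res_left _ _ _).mp le_sup_right)))
    (sup_le (ddrl_mul_le_mul le_rfl le_sup_left) (ddrl_mul_le_mul le_rfl le_sup_right))

lemma ddrl_sup_mul (a b c : A) :
    DDRL.mul (a ⊔ b) c = DDRL.mul a c ⊔ DDRL.mul b c :=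
  le_antisymm
    ((DDRL.res_right _ _ _).mpr (sup_le ((DDRL.res_right _ _ _).mp le_sup_left)
      ((DDRL.res_right _ _ _).mp le_sup_right)))
    (sup_le (ddrl_mul_le_mul le_sup_left le_rfl) (ddrl_mul_le_mul le_sup_right le_rfl))

end AuxMul

/-- Prime filter separation: a filter disjoint from an ideal (containing ⊥) extends to a
prime filter still disjoint from the ideal. -/
lemma primeFilter_separation {A : Type*} [DistribLattice A] [BoundedOrder A]
    {F D : Set A} (hF : IsFilter F)
    (hDlow : ∀ a b : A, a ∈ D → b ≤ a → b ∈ D)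
    (hDjoin : ∀ a b : A, a ∈ D → b ∈ D → a ⊔ b ∈ D)
    (hbot : (⊥ : A) ∈ D)
    (hdisj : ∀ a, a ∈ F → a ∉ D) :
    ∃ P : Set A, IsPrimeFilter P ∧ F ⊆ P ∧ ∀ a ∈ P, a ∉ D := by
  obtain ⟨hne, hup, hmeet⟩ := hF
  have hPF : Order.IsPFilter F :=
    Order.IsPFilter.of_def hne
      (fun a ha b hb => ⟨a ⊓ b, hmeet a b ha hb, inf_le_left, inf_le_right⟩)
      (fun {x y} hxy hx => hup x y hx hxy)
  have hID : Order.IsIdeal D :=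
    ⟨fun a b hba ha => hDlow a b ha hba, ⟨⊥, hbot⟩,
      fun a ha b hb => ⟨a ⊔ b, hDjoin a b ha hb, le_sup_left, le_sup_right⟩⟩
  have hsetF : (hPF.toPFilter : Set A) = F := rfl
  have hsetD : (hID.toIdeal : Set A) = D := rfl
  obtain ⟨J, hJprime, hIJ, hJdisj⟩ :=
    DistribLattice.prime_ideal_of_disjoint_filter_ideal
      (F := hPF.toPFilter) (I := hID.toIdeal)
      (by
        rw [Set.disjoint_left]
        intro a haF haD
        exact hdisj a (by rwa [hsetF] at haF) (by rwa [hsetD] at haD))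
  have hDJ : D ⊆ (J : Set A) := by
    intro a ha
    exact hIJ (by rwa [← hsetD] at ha : a ∈ hID.toIdeal)
  refine ⟨(J : Set A)ᶜ, ⟨⟨?_, ?_, ?_⟩, ?_, ?_⟩, ?_, ?_⟩
  · -- nonempty
    obtain ⟨t, ht⟩ := hJprime.compl_filter.Nonempty
    exact ⟨OrderDual.ofDual t, ht⟩
  · -- upward closed
    intro a b ha hab hbJ
    exact ha (J.lower hab hbJ)
  · -- meets
    intro a b ha hb hab
    rcases hJprime.mem_or_mem hab with h | h
    · exact ha h
    · exact hb h
  · -- ⊥ ∉ P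
    intro h
    exact h (hDJ hbot)
  · -- prime
    intro a b hab
    by_contra h
    push_neg at h
    obtain ⟨ha, hb⟩ := h
    simp only [Set.mem_compl_iff, not_not] at ha hb
    exact hab (Order.Ideal.sup_mem ha hb)
  · -- F ⊆ P
    intro a haF haJ
    exact Set.disjoint_left.mp hJdisj (by rwa [hsetF] : a ∈ (hPF.toPFilter : Set A)) haJ
  · -- disjoint from D
    intro a haP haD
    exact haP (hDJ haD)

/-- The prime filter frame of a disjointive distributive residuated lattice is a
disjointive associative frame. -/
theorem primeFilterFrame_isDA {A : Type*} [DDRL A] :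
    (∀ x y z : PF A, pfScirc (pfCirc x y) {z} = pfScirc {x} (pfCirc y z)) ∧
    (∀ X : Set (PF A), X ∩ pfN X = ∅) := by
  constructor
  · intro x y z
    ext u
    simp only [pfScirc, Set.mem_iUnion, Set.mem_singleton_iff, exists_prop, exists_eq_left]
    obtain ⟨⟨xne, xup, xmeet⟩, xbot, xprime⟩ := x.2
    obtain ⟨⟨yne, yup, ymeet⟩, ybot, yprime⟩ := y.2
    obtain ⟨⟨zne, zup, zmeet⟩, zbot, zprime⟩ := z.2
    obtain ⟨⟨une, uup, umeet⟩, ubot, uprime⟩ := u.2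
    constructor
    · rintro ⟨w, hw, hu⟩
      -- build v ∈ y ∘ z with u ∈ x ∘ v
      set F : Set A := {e | ∃ b ∈ y.1, ∃ d ∈ z.1, DDRL.mul b d ≤ e} with hFdef
      set D : Set A := {c | ∃ a ∈ x.1, DDRL.mul a c ∉ u.1} with hDdef
      have hF : IsFilter F := by
        refine ⟨?_, ?_, ?_⟩
        · obtain ⟨b, hb⟩ := yne; obtain ⟨d, hd⟩ := zne
          exact ⟨DDRL.mul b d, b, hb, d, hd, le_rfl⟩
        · rintro e e' ⟨b, hb, d, hd, hle⟩ hee'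
          exact ⟨b, hb, d, hd, le_trans hle hee'⟩
        · rintro e e' ⟨b, hb, d, hd, hle⟩ ⟨b', hb', d', hd', hle'⟩
          refine ⟨b ⊓ b', ymeet b b' hb hb', d ⊓ d', zmeet d d' hd hd', ?_⟩
          exact le_inf (le_trans (ddrl_mul_le_mul inf_le_left inf_le_left) hle)
            (le_trans (ddrl_mul_le_mul inf_le_right inf_le_right) hle')
      have hDlow : ∀ a b : A, a ∈ D → b ≤ a → b ∈ D := by
        rintro c c' ⟨a, ha, hnot⟩ hcc'
        exact ⟨a, ha, fun h => hnot (uup _ _ h (ddrl_mul_le_mul le_rfl hcc'))⟩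
      have hDjoin : ∀ a b : A, a ∈ D → b ∈ D → a ⊔ b ∈ D := by
        rintro c c' ⟨a, ha, hna⟩ ⟨a', ha', hna'⟩
        refine ⟨a ⊓ a', xmeet a a' ha ha', fun h => ?_⟩
        rw [ddrl_mul_sup] at h
        rcases uprime _ _ h with h1 | h1
        · exact hna (uup _ _ h1 (ddrl_mul_le_mul inf_le_left le_rfl))
        · exact hna' (uup _ _ h1 (ddrl_mul_le_mul inf_le_right le_rfl))
      have hbotD : (⊥ : A) ∈ D := by
        obtain ⟨a, ha⟩ := xne
        exact ⟨a, ha, by rw [ddrl_mul_bot]; exact ubot⟩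
      have hdisj : ∀ a, a ∈ F → a ∉ D := by
        rintro e ⟨b, hb, d, hd, hle⟩ ⟨a, ha, hnot⟩
        apply hnot
        have h1 : DDRL.mul (DDRL.mul a b) d ∈ u.1 := hu (DDRL.mul a b) (hw a ha b hb) d hd
        rw [DDRL.mul_assoc] at h1
        exact uup _ _ h1 (ddrl_mul_le_mul le_rfl hle)
      obtain ⟨P, hP, hFP, hPD⟩ := primeFilter_separation hF hDlow hDjoin hbotD hdisj
      refine ⟨⟨P, hP⟩, fun b hb d hd => hFP ⟨b, hb, d, hd, le_rfl⟩,
        fun a ha c hc => ?_⟩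
      by_contra h
      exact hPD c hc ⟨a, ha, h⟩
    · rintro ⟨v, hv, hu⟩
      -- build w ∈ x ∘ y with u ∈ w ∘ z
      set F : Set A := {e | ∃ a ∈ x.1, ∃ b ∈ y.1, DDRL.mul a b ≤ e} with hFdef
      set D : Set A := {c | ∃ d ∈ z.1, DDRL.mul c d ∉ u.1} with hDdef
      have hF : IsFilter F := by
        refine ⟨?_, ?_, ?_⟩
        · obtain ⟨a, ha⟩ := xne; obtain ⟨b, hb⟩ := yne
          exact ⟨DDRL.mul a b, a, ha, b, hb, le_rfl⟩
        · rintro e e' ⟨a, ha, b, hb, hle⟩ hee'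
          exact ⟨a, ha, b, hb, le_trans hle hee'⟩
        · rintro e e' ⟨a, ha, b, hb, hle⟩ ⟨a', ha', b', hb', hle'⟩
          refine ⟨a ⊓ a', xmeet a a' ha ha', b ⊓ b', ymeet b b' hb hb', ?_⟩
          exact le_inf (le_trans (ddrl_mul_le_mul inf_le_left inf_le_left) hle)
            (le_trans (ddrl_mul_le_mul inf_le_right inf_le_right) hle')
      have hDlow : ∀ a b : A, a ∈ D → b ≤ a → b ∈ D := by
        rintro c c' ⟨d, hd, hnot⟩ hcc'
        exact ⟨d, hd, fun h => hnot (uup _ _ h (ddrl_mul_le_mul hcc' le_rfl))⟩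
      have hDjoin : ∀ a b : A, a ∈ D → b ∈ D → a ⊔ b ∈ D := by
        rintro c c' ⟨d, hd, hnd⟩ ⟨d', hd', hnd'⟩
        refine ⟨d ⊓ d', zmeet d d' hd hd', fun h => ?_⟩
        rw [ddrl_sup_mul] at h
        rcases uprime _ _ h with h1 | h1
        · exact hnd (uup _ _ h1 (ddrl_mul_le_mul le_rfl inf_le_left))
        · exact hnd' (uup _ _ h1 (ddrl_mul_le_mul le_rfl inf_le_right))
      have hbotD : (⊥ : A) ∈ D := by
        obtain ⟨d, hd⟩ := zne
        exact ⟨d, hd, by rw [ddrl_bot_mul]; exact ubot⟩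
      have hdisj : ∀ a, a ∈ F → a ∉ D := by
        rintro e ⟨a, ha, b, hb, hle⟩ ⟨d, hd, hnot⟩
        apply hnot
        have h1 : DDRL.mul a (DDRL.mul b d) ∈ u.1 := hu a ha (DDRL.mul b d) (hv b hb d hd)
        rw [← DDRL.mul_assoc] at h1
        exact uup _ _ h1 (ddrl_mul_le_mul hle le_rfl)
      obtain ⟨P, hP, hFP, hPD⟩ := primeFilter_separation hF hDlow hDjoin hbotD hdisj
      refine ⟨⟨P, hP⟩, fun a ha b hb => hFP ⟨a, ha, b, hb, le_rfl⟩,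
        fun c hc d hd => ?_⟩
      by_contra h
      exact hPD c hc ⟨d, hd, h⟩
  · intro X
    ext x
    simp only [Set.mem_inter_iff, Set.mem_empty_iff_false, iff_false, not_and]
    intro hxX hxN
    by_cases h : ∃ a : A, X = {x : PF A | a ∈ x.1}
    · rw [pfN, dif_pos h] at hxN
      have ha : h.choose ∈ x.1 := by
        have := h.choose_spec
        rw [this] at hxX
        exact hxX
      have hmeet := x.2.1.2.2 _ _ ha hxN
      rw [DDRL.disjointive] at hmeet
      exact x.2.2.1 hmeet
    · rw [pfN, dif_neg h] at hxN
      exact hxN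
end
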